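/- Let (Y,T) be a minimal continuous flow and let t be a nonzero real number such that the time-(1/t) map T^{1/t} is not minimal. Then there exist a nonzero rational number r and a nonzero eigenvalue λ ∈ Λ(Y,T) such that t = rλ. -/

import Mathlib

open Set

/-- A continuous flow: a jointly continuous action of `ℝ` on `Y` with `T 0 = id` and
`T (s + t) = T s ∘ T t`. -/
def IsFlow {Y : Type*} [TopologicalSpace Y] (T : ℝ → Y → Y) : Prop :=
  Continuous (fun p : Y × ℝ => T p.2 p.1) ∧ (∀ y, T 0 y = y) ∧
    ∀ s t : ℝ, ∀ y, T (s + t) y = T s (T t y)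

/-- A set is invariant under the flow if `T t '' M = M` for all `t`. -/
def FlowInvariant {Y : Type*} (T : ℝ → Y → Y) (M : Set Y) : Prop :=
  ∀ t : ℝ, T t '' M = M

/-- The flow is minimal if the only closed invariant subsets are `∅` and `univ`. -/
def IsMinimalFlow {Y : Type*} [TopologicalSpace Y] (T : ℝ → Y → Y) : Prop :=
  ∀ M : Set Y, IsClosed M → FlowInvariant T M → M = ∅ ∨ M = univ

/-- A self-map is minimal if the only closed subsets `M` with `g '' M = M` are `∅` and `univ`. -/
def IsMinimalMap {Y : Type*} [TopologicalSpace Y] (g : Y → Y) : Prop :=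
  ∀ M : Set Y, IsClosed M → g '' M = M → M = ∅ ∨ M = univ

/-- `χ : Y → ℂ` is a (unit-circle valued) eigenvector of the flow `T` with eigenvalue `l ∈ ℝ`
if it is continuous, of modulus one, and `χ (T t y) = e^{2πi l t} * χ y`. -/
def IsEigenvector {Y : Type*} [TopologicalSpace Y] (T : ℝ → Y → Y) (l : ℝ) (χ : Y → ℂ) : Prop :=
  Continuous χ ∧ (∀ y, ‖χ y‖ = 1) ∧
    ∀ (y : Y) (t : ℝ), χ (T t y) = Complex.exp (2 * Real.pi * Complex.I * l * t) * χ y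

/-- The set `Λ(Y, T)` of eigenvalues of a flow. -/
def Eigenvalues {Y : Type*} [TopologicalSpace Y] (T : ℝ → Y → Y) : Set ℝ :=
  {l : ℝ | ∃ χ : Y → ℂ, IsEigenvector T l χ}

/-!
Let `s = 1/t` and let `M` be a minimal set of `T^s` inside a proper closed `T^s`-invariant set.
The times `u` with `T^u M = M` form a closed subgroup of `ℝ` containing `s`, proper because the
flow is minimal, hence equal to `bℤ` with `b > 0` and `s = n b`. As `T^s` commutes with every
`T^w`, minimality of `M` forces `T^w M = M` as soon as `T^w M` meets `M`. So `T^u m ↦ u mod b`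
(`m ∈ M`) is a well defined continuous map `Y → ℝ/bℤ` intertwining the flow with the rotation,
and composed with `ℝ/bℤ ≅ S¹` it is an eigenvector with eigenvalue `1/b = n t`.
-/
section MinimalSet

variable {X : Type*} [TopologicalSpace X] {g : X → X}

def IsMinimalSet (g : X → X) (M : Set X) : Prop :=
  Minimal (fun K : Set X => K.Nonempty ∧ IsClosed K ∧ g '' K = K) M

theorem exists_isMinimalSet_subset [CompactSpace X] (hg : Function.Injective g) {K : Set X}
    (hKc : IsClosed K) (hgK : g '' K = K) (hK : K.Nonempty) : ∃ M ⊆ K, IsMinimalSet g M := by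
  refine zorn_superset_nonempty {K : Set X | K.Nonempty ∧ IsClosed K ∧ g '' K = K}
    (fun c hc hchain hcne => ?_) K ⟨hK, hKc, hgK⟩
  have : Nonempty c := hcne.to_subtype
  refine ⟨⋂₀ c, ⟨?_, isClosed_sInter fun U hU => (hc hU).2.1, ?_⟩,
    fun U hU => sInter_subset_of_mem hU⟩
  · exact IsCompact.nonempty_sInter_of_directed_nonempty_isCompact_isClosed
      (fun U hU V hV => (hchain.total hU hV).elim (fun h => ⟨U, hU, subset_rfl, h⟩)
        (fun h => ⟨V, hV, h, subset_rfl⟩))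
      (fun U hU => (hc hU).1) (fun U hU => (hc hU).2.1.isCompact) (fun U hU => (hc hU).2.1)
  · rw [sInter_eq_iInter, hg.injOn.image_iInter_eq]
    exact iInter_congr fun U => (hc U.2).2.2

theorem IsMinimalSet.image_eq_of_inter_nonempty {M : Set X} (hM : IsMinimalSet g M)
    (hg : Function.Injective g) (h : X ≃ₜ X) (hgh : Function.Commute g h)
    (hne : (M ∩ h '' M).Nonempty) : h '' M = M := by
  obtain ⟨hMne, hMc, hgM⟩ := hM.prop
  have himage : ∀ h' : X ≃ₜ X, Function.Commute g h' → g '' (h' '' M) = h' '' M :=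
    fun h' hc => by rw [hc.set_image M, hgM]
  have hsub : M ⊆ h '' M := inter_eq_left.1 <| hM.eq_of_subset
    ⟨hne, hMc.inter (h.isClosed_image.2 hMc), by rw [image_inter hg, hgM, himage h hgh]⟩
    inter_subset_left
  have hsymm : h.symm '' M = M := hM.eq_of_subset
    ⟨hMne.image _, h.symm.isClosed_image.2 hMc,
      himage h.symm (hgh.inverses_right h.right_inv h.left_inv)⟩
    ((image_mono hsub).trans (h.symm_image_image M).subset)
  conv_lhs => rw [← hsymm]
  exact h.image_symm_image M

end MinimalSet

theorem AddSubgroup.exists_pos_eq_zmultiples_of_isClosed {G : Type*} [AddCommGroup G]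
    [LinearOrder G] [IsOrderedAddMonoid G] [Archimedean G] [TopologicalSpace G]
    [OrderTopology G] {S : AddSubgroup G} (hS : IsClosed (S : Set G)) (htop : S ≠ ⊤)
    (hbot : S ≠ ⊥) : ∃ b, 0 < b ∧ S = AddSubgroup.zmultiples b := by
  rcases S.dense_or_cyclic with hd | ⟨a, rfl⟩
  · exact absurd (SetLike.coe_injective (hS.closure_eq.symm.trans hd.closure_eq)) htop
  · refine ⟨|a|, abs_pos.2 fun ha => hbot (by simp [ha]), ?_⟩
    rw [zmultiples_abs, AddSubgroup.zmultiples_eq_closure]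

namespace IsFlow

variable {Y : Type*} [TopologicalSpace Y] {T : ℝ → Y → Y}

theorem continuous_uncurry (hT : IsFlow T) : Continuous fun p : ℝ × Y => T p.1 p.2 :=
  hT.1.comp continuous_swap

theorem map_zero_apply (hT : IsFlow T) (y : Y) : T 0 y = y :=
  hT.2.1 y

theorem map_add (hT : IsFlow T) (u v : ℝ) (y : Y) : T (u + v) y = T u (T v y) :=
  hT.2.2 u v y

def toFlow (hT : IsFlow T) : Flow ℝ Y where
  toFun := T
  cont' := hT.continuous_uncurry
  map_add' := hT.2.2
  map_zero' := hT.map_zero_apply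

theorem commute (hT : IsFlow T) (u v : ℝ) : Function.Commute (T u) (T v) := fun y => by
  rw [← hT.map_add, add_comm, hT.map_add]

theorem image_image (hT : IsFlow T) (u v : ℝ) (M : Set Y) :
    T u '' (T v '' M) = T (u + v) '' M := by
  simp only [Set.image_image, hT.map_add]

theorem image_eq_of_mapsTo (hT : IsFlow T) {u : ℝ} {M : Set Y} (h₁ : MapsTo (T u) M M)
    (h₂ : MapsTo (T (-u)) M M) : T u '' M = M :=
  h₁.image_subset.antisymm fun m hm =>
    ⟨T (-u) m, h₂ hm, by rw [← hT.map_add, add_neg_cancel, hT.map_zero_apply]⟩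

def returnTimes (hT : IsFlow T) (M : Set Y) : AddSubgroup ℝ where
  carrier := {u | T u '' M = M}
  zero_mem' := by simp [hT.map_zero_apply]
  add_mem' {u v} hu hv := by rw [mem_ofPred_eq, ← hT.image_image, hv, hu]
  neg_mem' {u} hu := by
    rw [mem_ofPred_eq]
    conv_lhs => rw [← hu]
    rw [hT.image_image, neg_add_cancel]
    simp [hT.map_zero_apply]

theorem isClosed_returnTimes (hT : IsFlow T) {M : Set Y} (hM : IsClosed M) :
    IsClosed (hT.returnTimes M : Set ℝ) := by
  have hC : IsClosed {u : ℝ | MapsTo (T u) M M} :=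
    hM.setOfPred_mapsTo fun _ _ =>
      hT.continuous_uncurry.comp (continuous_id.prodMk continuous_const)
  convert hC.inter (hC.preimage continuous_neg) using 1
  ext u
  refine ⟨fun hu => ⟨mapsTo_iff_image_subset.2 hu.subset,
    mapsTo_iff_image_subset.2 ((hT.returnTimes M).neg_mem hu).subset⟩,
    fun h => hT.image_eq_of_mapsTo h.1 h.2⟩

theorem returnTimes_ne_top (hT : IsFlow T) (hmin : IsMinimalFlow T) {M : Set Y}
    (hMc : IsClosed M) (hMne : M.Nonempty) (hM : M ≠ univ) : hT.returnTimes M ≠ ⊤ := fun htop =>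
  hM <| (hmin M hMc fun u => (htop ▸ AddSubgroup.mem_top u : u ∈ hT.returnTimes M)).resolve_left
    hMne.ne_empty

theorem image_Icc_prod_eq_univ [CompactSpace Y] [T2Space Y] (hT : IsFlow T)
    (hmin : IsMinimalFlow T) {M : Set Y} (hMc : IsClosed M) (hMne : M.Nonempty) {b : ℝ}
    (hb0 : 0 < b) (hb : b ∈ hT.returnTimes M) :
    (fun p : ℝ × Y => T p.1 p.2) '' (Icc 0 b ×ˢ M) = univ := by
  set N := (fun p : ℝ × Y => T p.1 p.2) '' (Icc 0 b ×ˢ M)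
  have hN : ∀ w, ∀ m ∈ M, T w m ∈ N := by
    intro w m hm
    -- `w = b * fract (w / b) + ⌊w / b⌋ * b`, and `T (⌊w / b⌋ * b)` preserves `M`
    have hk : (⌊w / b⌋ : ℝ) * b ∈ hT.returnTimes M := by
      simpa [zsmul_eq_mul] using (hT.returnTimes M).zsmul_mem hb ⌊w / b⌋
    refine ⟨(b * Int.fract (w / b), T (⌊w / b⌋ * b) m), ⟨⟨?_, ?_⟩, hk ▸ mem_image_of_mem _ hm⟩, ?_⟩
    · exact mul_nonneg hb0.le (Int.fract_nonneg _)
    · exact mul_le_of_le_one_right hb0.le (Int.fract_lt_one _).le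
    · dsimp only
      rw [← hT.map_add, Int.fract]
      congr 1
      field_simp
      ring
  have hmaps : ∀ v, MapsTo (T v) N N := by
    rintro v _ ⟨⟨u, m⟩, ⟨-, hm⟩, rfl⟩
    rw [← hT.map_add]
    exact hN _ _ hm
  have hNc : IsClosed N :=
    ((isCompact_Icc.prod hMc.isCompact).image hT.continuous_uncurry).isClosed
  obtain ⟨m, hm⟩ := hMne
  exact (hmin N hNc fun v => hT.image_eq_of_mapsTo (hmaps v) (hmaps (-v))).resolve_left
    (nonempty_iff_ne_empty.1 ⟨_, hN 0 m hm⟩)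

theorem exists_addCircle_factor [CompactSpace Y] [T2Space Y] (hT : IsFlow T)
    (hmin : IsMinimalFlow T) {M : Set Y} (hMc : IsClosed M) (hMne : M.Nonempty) {b : ℝ}
    (hb0 : 0 < b) (hb : b ∈ hT.returnTimes M)
    (hsec : ∀ w, (M ∩ T w '' M).Nonempty → w ∈ AddSubgroup.zmultiples b) :
    ∃ p : Y → AddCircle b, Continuous p ∧ ∀ y v, p (T v y) = p y + v := by
  let K : Set (ℝ × Y) := Icc 0 b ×ˢ M
  have : CompactSpace K := isCompact_iff_compactSpace.1 (isCompact_Icc.prod hMc.isCompact)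
  let φ : K → Y := fun q => T q.1.1 q.1.2
  have hφc : Continuous φ := hT.continuous_uncurry.comp continuous_subtype_val
  have hφ : Function.Surjective φ := fun y => by
    obtain ⟨q, hq, rfl⟩ := (hT.image_Icc_prod_eq_univ hmin hMc hMne hb0 hb).symm ▸ mem_univ y
    exact ⟨⟨q, hq⟩, rfl⟩
  choose q hq using hφ
  -- `p y` is the time, mod `b`, at which the flow reaches `y` from `M`
  let p : Y → AddCircle b := fun y => ((q y : ℝ × Y).1 : AddCircle b)
  have hp : ∀ u, ∀ m ∈ M, p (T u m) = u := by
    intro u m hm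
    set k := q (T u m)
    have hφk : T k.1.1 k.1.2 = T u m := hq _
    have hk : k.1.2 = T (u - k.1.1) m := by
      rw [sub_eq_neg_add, hT.map_add, ← hφk, ← hT.map_add, neg_add_cancel, hT.map_zero_apply]
    exact (QuotientAddGroup.eq_iff_sub_mem.2 (hsec _ ⟨_, k.2.2, m, hm, hk.symm⟩)).symm
  refine ⟨p, ?_, fun y v => ?_⟩
  · rw [(Topology.IsQuotientMap.of_surjective_continuous (fun y => ⟨q y, hq y⟩) hφc).continuous_iff]
    have hpφ : p ∘ φ = fun k : K => ((k : ℝ × Y).1 : AddCircle b) := funext fun k => hp _ _ k.2.2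
    rw [hpφ]
    exact (AddCircle.continuous_mk' b).comp (continuous_fst.comp continuous_subtype_val)
  · conv_lhs => rw [← hq y]
    rw [← hT.map_add, hp _ _ (q y).2.2, QuotientAddGroup.mk_add, add_comm]

end IsFlow

theorem inv_mem_eigenvalues_of_addCircle_factor {Y : Type*} [TopologicalSpace Y]
    {T : ℝ → Y → Y} {b : ℝ} (p : Y → AddCircle b) (hp : Continuous p)
    (hpT : ∀ y v, p (T v y) = p y + v) : b⁻¹ ∈ Eigenvalues T := by
  refine ⟨fun y => (AddCircle.toCircle (p y) : ℂ),
    continuous_subtype_val.comp (AddCircle.continuous_toCircle.comp hp),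
    fun y => Circle.norm_coe _, fun y v => ?_⟩
  change (AddCircle.toCircle (p (T v y)) : ℂ) = _ * (AddCircle.toCircle (p y) : ℂ)
  rw [hpT, AddCircle.toCircle_add, Circle.coe_mul, AddCircle.toCircle_apply_mk, Circle.coe_exp,
    mul_comm]
  congr 2
  push_cast
  ring

theorem exists_rat_eigenvalue_of_not_minimal_general {Y : Type*} [MetricSpace Y] [CompactSpace Y]
    (T : ℝ → Y → Y) (hT : IsFlow T) (hmin : IsMinimalFlow T)
    (t : ℝ) (ht : t ≠ 0) (h : ¬ IsMinimalMap (T (1 / t))) :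
    ∃ (r : ℚ) (l : ℝ), r ≠ 0 ∧ l ∈ Eigenvalues T ∧ l ≠ 0 ∧ t = (r : ℝ) * l := by
  obtain ⟨M₀, hM₀c, hM₀i, hM₀ne, hM₀univ⟩ :
      ∃ M₀ : Set Y, IsClosed M₀ ∧ T (1 / t) '' M₀ = M₀ ∧ M₀ ≠ ∅ ∧ M₀ ≠ univ := by
    simpa [IsMinimalMap, not_or] using h
  let Φ := hT.toFlow.toHomeomorph
  obtain ⟨M, hMM₀, hM⟩ := exists_isMinimalSet_subset (Φ (1 / t)).injective hM₀c hM₀i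
    (nonempty_iff_ne_empty.2 hM₀ne)
  obtain ⟨hMne, hMc, hMi⟩ := hM.prop
  have hs : 1 / t ∈ hT.returnTimes M := hMi
  have hsec : ∀ w, (M ∩ T w '' M).Nonempty → w ∈ hT.returnTimes M := fun w =>
    hM.image_eq_of_inter_nonempty (Φ _).injective (Φ w) (hT.commute _ _)
  have htop : hT.returnTimes M ≠ ⊤ := hT.returnTimes_ne_top hmin hMc hMne fun hMuniv =>
    hM₀univ (univ_subset_iff.1 (hMuniv ▸ hMM₀))
  have hbot : hT.returnTimes M ≠ ⊥ := fun hbot =>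
    one_div_ne_zero ht (AddSubgroup.mem_bot.1 (hbot ▸ hs))
  obtain ⟨b, hb0, hS⟩ := AddSubgroup.exists_pos_eq_zmultiples_of_isClosed
    (hT.isClosed_returnTimes hMc) htop hbot
  obtain ⟨n, hn⟩ := AddSubgroup.mem_zmultiples_iff.1 (hS ▸ hs)
  obtain ⟨p, hp, hpT⟩ := hT.exists_addCircle_factor hmin hMc hMne hb0
    (hS ▸ AddSubgroup.mem_zmultiples b) fun w hw => hS ▸ hsec w hw
  rw [zsmul_eq_mul] at hn
  have hn0 : (n : ℝ) ≠ 0 := fun hn0 => one_div_ne_zero ht (by rw [← hn, hn0, zero_mul])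
  refine ⟨(n : ℚ)⁻¹, b⁻¹, inv_ne_zero (by exact_mod_cast hn0),
    inv_mem_eigenvalues_of_addCircle_factor p hp hpT, inv_ne_zero hb0.ne', ?_⟩
  push_cast
  rw [← mul_inv, hn, one_div, inv_inv]

/-- If `(Y, T)` is a minimal continuous flow and `t ≠ 0` is such that the
time-`1/t` map is not minimal, then `t = r * λ` for some nonzero rational `r` and some nonzero
eigenvalue `λ ∈ Λ(Y, T)`. -/
theorem exists_rat_eigenvalue_of_not_minimal {Y : Type*} [MetricSpace Y] [CompactSpace Y]
    [Nonempty Y] (T : ℝ → Y → Y) (hT : IsFlow T) (hmin : IsMinimalFlow T)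
    (t : ℝ) (ht : t ≠ 0) (h : ¬ IsMinimalMap (T (1 / t))) :
    ∃ (r : ℚ) (l : ℝ), r ≠ 0 ∧ l ∈ Eigenvalues T ∧ l ≠ 0 ∧ t = (r : ℝ) * l :=
  exists_rat_eigenvalue_of_not_minimal_general T hT hmin t ht h
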